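/- arXiv:2211.07873 — 3 statements merged into one kernel-verified Lean document; each statement's English description precedes it below -/
import Mathlib

section
/- Let q ≥ 1 be an integer. A point (z₀, z₁) ∈ S³ represents a fixed point of the involution τ on L_{2q} — that is, (conj(z₀), conj(z₁)) lies in the μ_{2q}-orbit of (z₀, z₁) — if and only if there exists θ ∈ ℝ such that (z₀, z₁) lies in the μ_{2q}-orbit of (cos θ, sin θ) or in the μ_{2q}-orbit of (e^{−iπ/(2q)} cos θ, e^{−iπ/(2q)} sin θ). -/
/-! If `conj z = u • z` with `u ^ p = 1`, pick `v` with `v ^ 2 = u`; then `conj (v • z) = v • z`,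
so `z = c • x` with `x` real (hence `x = (cos θ, sin θ)` on the sphere) and `c = conj v` a square
root of a `p`-th root of unity. Such `c` have `c ^ p = ±1`, i.e. `c ∈ μ_p` or
`c ∈ μ_p · exp (-π i / p)`. Conversely `conj (c • x) = (conj c) ^ 2 • (c • x)` for real `x`. -/

open Complex Real

/-- `w` lies in the `μ_p`-orbit of `z`, where the group `μ_p` of `p`-th roots of unity
acts on `ℂ²` by scalar multiplication. -/
def lensRelC (p : ℕ) (z w : ℂ × ℂ) : Prop :=
  ∃ u : ℂ, u ^ p = 1 ∧ w = (u * z.1, u * z.2)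

lemma conj_mul_self_of_norm_eq_one {c : ℂ} (hc : ‖c‖ = 1) : (starRingEnd ℂ) c * c = 1 := by
  rw [conj_mul', hc]
  norm_num

lemma exists_cos_sin_eq_of_sq_add_sq_eq_one {a b : ℝ} (h : a ^ 2 + b ^ 2 = 1) :
    ∃ θ : ℝ, Real.cos θ = a ∧ Real.sin θ = b := by
  have hnorm : ‖(⟨a, b⟩ : ℂ)‖ = 1 := by
    rw [norm_def, normSq_mk, ← sq, ← sq, h, Real.sqrt_one]
  have hne : (⟨a, b⟩ : ℂ) ≠ 0 := by
    rintro h0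
    simp [h0] at hnorm
  exact ⟨arg ⟨a, b⟩, by rw [cos_arg hne, hnorm, div_one], by rw [sin_arg, hnorm, div_one]⟩

lemma exp_neg_pi_mul_I_div_pow {p : ℕ} (hp : p ≠ 0) :
    Complex.exp (-(π : ℂ) * I / p) ^ p = -1 := by
  rw [← Complex.exp_nat_mul, mul_div_cancel₀ _ (Nat.cast_ne_zero.mpr hp), neg_mul, Complex.exp_neg,
    exp_pi_mul_I]
  norm_num

lemma pow_two_mul_eq_one_iff {p : ℕ} (hp : p ≠ 0) {c : ℂ} :
    c ^ (2 * p) = 1 ↔ c ^ p = 1 ∨ ∃ w : ℂ, w ^ p = 1 ∧ c = w * Complex.exp (-(π : ℂ) * I / p) := by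
  set ζ := Complex.exp (-(π : ℂ) * I / p)
  have hζ : ζ ^ p = -1 := exp_neg_pi_mul_I_div_pow hp
  have hζ0 : ζ ≠ 0 := Complex.exp_ne_zero _
  rw [mul_comm, pow_mul, sq_eq_one_iff]
  refine or_congr Iff.rfl ⟨fun h => ⟨c * ζ⁻¹, ?_, by field_simp⟩, ?_⟩
  · rw [mul_pow, inv_pow, h, hζ]
    norm_num
  · rintro ⟨w, hw, rfl⟩
    rw [mul_pow, hw, hζ, one_mul]

lemma lensRelC_conj_mul_ofReal {p : ℕ} (hp : p ≠ 0) {c : ℂ} (hc : c ^ (2 * p) = 1) (a b : ℝ) :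
    lensRelC p (c * a, c * b) ((starRingEnd ℂ) (c * a), (starRingEnd ℂ) (c * b)) := by
  have hcc := conj_mul_self_of_norm_eq_one (norm_eq_one_of_pow_eq_one hc (by omega))
  refine ⟨(starRingEnd ℂ) c ^ 2, by rw [← pow_mul, ← map_pow, hc, map_one], ?_⟩
  simp only [Prod.mk.injEq, map_mul, conj_ofReal]
  constructor
  · linear_combination -((starRingEnd ℂ) c * a) * hcc
  · linear_combination -((starRingEnd ℂ) c * b) * hcc

lemma exists_eq_mul_ofReal_of_lensRelC_conj {p : ℕ} (hp : p ≠ 0) {z₀ z₁ : ℂ}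
    (h : lensRelC p (z₀, z₁) ((starRingEnd ℂ) z₀, (starRingEnd ℂ) z₁)) :
    ∃ c : ℂ, ∃ a b : ℝ, c ^ (2 * p) = 1 ∧ (z₀, z₁) = (c * a, c * b) := by
  obtain ⟨u, hu, hconj⟩ := h
  obtain ⟨hz₀, hz₁⟩ := Prod.mk.inj hconj
  obtain ⟨v, hv⟩ := IsAlgClosed.exists_pow_nat_eq u two_pos
  have hv2p : v ^ (2 * p) = 1 := by rw [pow_mul, hv, hu]
  have hvv := conj_mul_self_of_norm_eq_one (norm_eq_one_of_pow_eq_one hv2p (by omega))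
  have hreal : ∀ {w : ℂ}, (starRingEnd ℂ) w = u * w → ((v * w).re : ℂ) = v * w := fun {w} hw =>
    conj_eq_iff_re.mp (by rw [map_mul, hw, ← hv]; linear_combination v * w * hvv)
  refine ⟨(starRingEnd ℂ) v, (v * z₀).re, (v * z₁).re,
    by rw [← map_pow, hv2p, map_one], ?_⟩
  rw [hreal hz₀, hreal hz₁, Prod.mk.injEq]
  constructor
  · linear_combination -z₀ * hvv
  · linear_combination -z₁ * hvv

lemma lensRelC_conj_iff {p : ℕ} (hp : p ≠ 0) {z₀ z₁ : ℂ} :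
    lensRelC p (z₀, z₁) ((starRingEnd ℂ) z₀, (starRingEnd ℂ) z₁) ↔
      ∃ c : ℂ, ∃ a b : ℝ, c ^ (2 * p) = 1 ∧ (z₀, z₁) = (c * a, c * b) := by
  refine ⟨exists_eq_mul_ofReal_of_lensRelC_conj hp, ?_⟩
  rintro ⟨c, a, b, hc, hz⟩
  obtain ⟨rfl, rfl⟩ := Prod.mk.inj hz
  exact lensRelC_conj_mul_ofReal hp hc a b

/-- Let `q ≥ 1`. A point `(z₀, z₁) ∈ S³` represents a fixed point of
the involution `τ` on `L_{2q}` — i.e. `(conj z₀, conj z₁)` lies in the `μ_{2q}`-orbit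
of `(z₀, z₁)` — if and only if there is `θ ∈ ℝ` such that `(z₀, z₁)` lies in the
`μ_{2q}`-orbit of `(cos θ, sin θ)` or in the `μ_{2q}`-orbit of
`(e^{-iπ/(2q)} cos θ, e^{-iπ/(2q)} sin θ)`. -/
theorem fixed_points_of_lens_involution (q : ℕ) (hq : 1 ≤ q) (z₀ z₁ : ℂ)
    (hz : ‖z₀‖ ^ 2 + ‖z₁‖ ^ 2 = 1) :
    lensRelC (2 * q) (z₀, z₁) ((starRingEnd ℂ) z₀, (starRingEnd ℂ) z₁) ↔
      ∃ θ : ℝ,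
        lensRelC (2 * q) (((Real.cos θ : ℝ) : ℂ), ((Real.sin θ : ℝ) : ℂ)) (z₀, z₁) ∨
        lensRelC (2 * q)
          (Complex.exp (-(π : ℂ) * Complex.I / (2 * q)) * ((Real.cos θ : ℝ) : ℂ),
           Complex.exp (-(π : ℂ) * Complex.I / (2 * q)) * ((Real.sin θ : ℝ) : ℂ))
          (z₀, z₁) := by
  have hp : 2 * q ≠ 0 := by omega
  have hroots := fun c : ℂ => pow_two_mul_eq_one_iff hp (c := c)
  push_cast at hroots
  rw [lensRelC_conj_iff hp]
  constructor
  · rintro ⟨c, a, b, hc, hzc⟩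
    obtain ⟨rfl, rfl⟩ := Prod.mk.inj hzc
    have hab : a ^ 2 + b ^ 2 = 1 := by
      simpa [norm_mul, norm_eq_one_of_pow_eq_one hc (by omega)] using hz
    obtain ⟨θ, rfl, rfl⟩ := exists_cos_sin_eq_of_sq_add_sq_eq_one hab
    refine ⟨θ, ?_⟩
    rcases (hroots c).mp hc with hc | ⟨w, hw, rfl⟩
    · exact Or.inl ⟨c, hc, rfl⟩
    · exact Or.inr ⟨w, hw, by simp only [mul_assoc]⟩
  · rintro ⟨θ, ⟨w, hw, hzw⟩ | ⟨w, hw, hzw⟩⟩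
    · exact ⟨w, _, _, (hroots w).mpr (Or.inl hw), hzw⟩
    · refine ⟨w * Complex.exp (-(π : ℂ) * I / (2 * q)), Real.cos θ, Real.sin θ,
        (hroots _).mpr (Or.inr ⟨w, hw, rfl⟩), ?_⟩
      simp only [hzw, mul_assoc]
end

section
/- There is no continuous function s : ℝ → ℂ which is 2π-periodic (s(θ + 2π) = s(θ) for all θ), nowhere vanishing, and satisfies s(θ) = e^{iθ} · conj(s(θ)) for all θ ∈ ℝ. Equivalently, the product line bundle S¹ × ℂ over the circle S¹ = ℝ/2πℤ (with trivial involution on the base) endowed with the 'Real' structure (θ, λ) ↦ (θ, e^{iθ} · conj(λ)) admits no nowhere-vanishing invariant continuous section, and hence is a non-trivial 'Real' line bundle. -/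
/-!
Untwisting by `e^{-iθ/2}` turns an invariant section `s` into `f θ = e^{-iθ/2} s θ`, which is
real-valued because `s θ = e^{iθ} conj (s θ)`, but is antiperiodic, `f (θ + 2π) = -f θ`, since
the square root `e^{-iθ/2}` changes sign around the circle. A continuous real function taking
opposite values at `0` and `2π` vanishes somewhere, so `s` does too.
-/

open Complex Real
open scoped ComplexConjugate

theorem Real.exists_eq_zero_of_map_eq_neg {f : ℝ → ℝ} {a b : ℝ}
    (hf : ContinuousOn f (Set.uIcc a b)) (hab : f b = -f a) : ∃ c ∈ Set.uIcc a b, f c = 0 := by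
  have h0 : (0 : ℝ) ∈ Set.uIcc (f a) (f b) := by
    rw [hab, Set.mem_uIcc]
    rcases le_total 0 (f a) with h | h
    · exact Or.inr ⟨by linarith, h⟩
    · exact Or.inl ⟨h, by linarith⟩
  exact intermediate_value_uIcc hf h0

theorem Complex.exists_eq_zero_of_conj_eq_of_map_eq_neg {f : ℝ → ℂ} {a b : ℝ}
    (hf : Continuous f) (hreal : ∀ x, conj (f x) = f x) (hab : f b = -f a) :
    ∃ c, f c = 0 := by
  have hre : ∀ x, ((f x).re : ℂ) = f x := fun x => conj_eq_iff_re.1 (hreal x)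
  obtain ⟨c, -, hc⟩ := Real.exists_eq_zero_of_map_eq_neg (f := fun x => (f x).re)
    (continuous_re.comp hf).continuousOn (by show (f b).re = -(f a).re; rw [hab, neg_re])
  exact ⟨c, by rw [← hre c, hc, ofReal_zero]⟩

theorem Complex.conj_exp_neg_half_mul_I_mul {θ : ℝ} {w : ℂ} (hw : w = exp (θ * I) * conj w) :
    conj (exp (-θ / 2 * I) * w) = exp (-θ / 2 * I) * w := by
  have hconj : conj w = exp (-θ * I) * w :=
    calc conj w = exp (-θ * I) * (exp (θ * I) * conj w) := by
          rw [← mul_assoc, ← exp_add, neg_mul, neg_add_cancel, exp_zero, one_mul]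
      _ = exp (-θ * I) * w := by rw [← hw]
  rw [map_mul, hconj, ← exp_conj, ← mul_assoc, ← exp_add]
  congr 2
  simp only [map_mul, map_div₀, map_neg, conj_ofReal, conj_I, map_ofNat]
  ring

theorem Complex.exp_neg_half_mul_I_add_two_pi (θ : ℝ) :
    exp (-((θ + 2 * π : ℝ) : ℂ) / 2 * I) = -exp (-θ / 2 * I) := by
  rw [← exp_sub_pi_mul_I]
  congr 1
  push_cast
  ring

/-- There is no continuous, `2π`-periodic, nowhere-vanishing function
`s : ℝ → ℂ` satisfying `s θ = e^{iθ} · conj (s θ)` for all `θ`. Equivalently, the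
product line bundle over the circle `ℝ/2πℤ` endowed with the "Real" structure
`(θ, λ) ↦ (θ, e^{iθ} conj λ)` admits no nowhere-vanishing invariant continuous section,
hence is a non-trivial "Real" line bundle. -/
theorem no_invariant_section :
    ¬ ∃ s : ℝ → ℂ, Continuous s ∧ (∀ θ : ℝ, s (θ + 2 * π) = s θ) ∧
      (∀ θ : ℝ, s θ ≠ 0) ∧
      (∀ θ : ℝ, s θ = Complex.exp ((θ : ℂ) * Complex.I) * (starRingEnd ℂ) (s θ)) := by
  rintro ⟨s, hs, hper, hne, hR⟩
  set f : ℝ → ℂ := fun θ => exp (-θ / 2 * I) * s θ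
  have hf : Continuous f := by fun_prop
  have hreal : ∀ θ, conj (f θ) = f θ := fun θ => conj_exp_neg_half_mul_I_mul (hR θ)
  have hanti : f (0 + 2 * π) = -f 0 := by
    simp only [f, hper, exp_neg_half_mul_I_add_two_pi, neg_mul]
  obtain ⟨c, hc⟩ := exists_eq_zero_of_conj_eq_of_map_eq_neg hf hreal hanti
  exact mul_ne_zero (Complex.exp_ne_zero _) (hne c) hc
end

section
/- Let e₁, e₂ ∈ ℝ³ be the first two standard basis vectors and let D = diag(1, −1, −1), which is an element of SO(3). For all R, R' ∈ SO(3), the conditions R' e₁ = R e₁ and (R' e₂ = R e₂ or R' e₂ = −R e₂) hold if and only if R' = R or R' = R·D. Consequently, each fiber of the map from SO(3) to the space of pairs (unit vector, tangent line) given by R ↦ (R e₁, span(R e₂)) consists of exactly two elements. -/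
/-- `SO(3)`: the real orthogonal `3×3` matrices of determinant `1`. -/
def SO3 : Set (Matrix (Fin 3) (Fin 3) ℝ) :=
  {R | R.transpose * R = 1 ∧ R.det = 1}

/-- The rotation `D = diag(1, -1, -1)` by angle `π` around the first axis. -/
def Dmat : Matrix (Fin 3) (Fin 3) ℝ := Matrix.diagonal ![1, -1, -1]

/-- The first standard basis vector `e₁ ∈ ℝ³`. -/
def e₁ : Fin 3 → ℝ := Pi.single 0 1

/-- The second standard basis vector `e₂ ∈ ℝ³`. -/
def e₂ : Fin 3 → ℝ := Pi.single 1 1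

/-! An element of `SO(3)` is determined by its first two columns: orthogonality and `det = 1`
force the third one. As `R * Dmat` has columns `R e₁` and `-(R e₂)`, and a unit vector spans the
same line as exactly itself and its negative, the fiber over `(R e₁, span (R e₂))` is
`{R, R * Dmat}`, two distinct matrices. -/

open Matrix

lemma dotProduct_mulVec_mulVec_of_transpose_mul_self {n R : Type*} [Fintype n] [DecidableEq n]
    [CommSemiring R] {A : Matrix n n R} (hA : Aᵀ * A = 1) (v w : n → R) :
    (A *ᵥ v) ⬝ᵥ (A *ᵥ w) = v ⬝ᵥ w := by
  rw [dotProduct_mulVec, ← mulVec_transpose, mulVec_mulVec, hA, one_mulVec]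

lemma span_singleton_eq_span_singleton_iff_eq_or_eq_neg {n K : Type*} [Fintype n] [Field K]
    {u v : n → K} (hv : v ⬝ᵥ v ≠ 0) (huv : u ⬝ᵥ u = v ⬝ᵥ v) :
    Submodule.span K {u} = Submodule.span K {v} ↔ u = v ∨ u = -v := by
  constructor
  · intro h
    obtain ⟨c, rfl⟩ := (Submodule.span_singleton_eq_span_singleton.mp h.symm)
    have hc : (c : K) * c = 1 := by
      rw [Units.smul_def, smul_dotProduct, dotProduct_smul, smul_eq_mul, smul_eq_mul,
        ← mul_assoc] at huv
      exact (mul_eq_right₀ hv).mp huv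
    rcases mul_self_eq_one_iff.mp hc with hc | hc <;> simp [Units.smul_def, hc]
  · rintro (rfl | rfl)
    · rfl
    · rw [← Set.neg_singleton, Submodule.span_neg]

lemma mulVec_e₁ (M : Matrix (Fin 3) (Fin 3) ℝ) : M *ᵥ e₁ = M.col 0 := mulVec_single_one M 0

lemma mulVec_e₂ (M : Matrix (Fin 3) (Fin 3) ℝ) : M *ᵥ e₂ = M.col 1 := mulVec_single_one M 1

lemma mul_transpose_eq_one_of_mem_SO3 {R : Matrix (Fin 3) (Fin 3) ℝ} (hR : R ∈ SO3) :
    R * Rᵀ = 1 :=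
  mul_eq_one_comm.mp hR.1

lemma mul_mem_SO3 {A B : Matrix (Fin 3) (Fin 3) ℝ} (hA : A ∈ SO3) (hB : B ∈ SO3) :
    A * B ∈ SO3 := by
  constructor
  · rw [transpose_mul, Matrix.mul_assoc, ← Matrix.mul_assoc Aᵀ, hA.1, Matrix.one_mul, hB.1]
  · rw [det_mul, hA.2, hB.2, one_mul]

lemma transpose_mem_SO3 {A : Matrix (Fin 3) (Fin 3) ℝ} (hA : A ∈ SO3) : Aᵀ ∈ SO3 :=
  ⟨by rw [transpose_transpose, mul_transpose_eq_one_of_mem_SO3 hA], by rw [det_transpose, hA.2]⟩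

lemma Dmat_mem_SO3 : Dmat ∈ SO3 := by
  constructor
  · ext i j
    fin_cases i <;> fin_cases j <;> simp [Dmat]
  · simp [Dmat, Fin.prod_univ_three]

lemma Dmat_ne_one : Dmat ≠ 1 := fun h => by
  have h₁₁ := congrFun (congrFun h 1) 1
  norm_num [Dmat] at h₁₁

lemma Dmat_mulVec_e₁ : Dmat *ᵥ e₁ = e₁ := by
  ext i; fin_cases i <;> simp [Dmat, e₁]

lemma Dmat_mulVec_e₂ : Dmat *ᵥ e₂ = -e₂ := by
  ext i; fin_cases i <;> simp [Dmat, e₂]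

lemma eq_one_of_mem_SO3_of_mulVec_e₁_of_mulVec_e₂ {S : Matrix (Fin 3) (Fin 3) ℝ} (hS : S ∈ SO3)
    (h₁ : S *ᵥ e₁ = e₁) (h₂ : S *ᵥ e₂ = e₂) : S = 1 := by
  have col₀ := congrFun ((mulVec_e₁ S).symm.trans h₁)
  have col₁ := congrFun ((mulVec_e₂ S).symm.trans h₂)
  have hS₀₀ : S 0 0 = 1 := by simpa [e₁] using col₀ 0
  have hS₁₀ : S 1 0 = 0 := by simpa [e₁] using col₀ 1
  have hS₂₀ : S 2 0 = 0 := by simpa [e₁] using col₀ 2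
  have hS₀₁ : S 0 1 = 0 := by simpa [e₂] using col₁ 0
  have hS₁₁ : S 1 1 = 1 := by simpa [e₂] using col₁ 1
  have hS₂₁ : S 2 1 = 0 := by simpa [e₂] using col₁ 2
  have orth (j : Fin 3) : (Sᵀ * S) j 2 = (1 : Matrix (Fin 3) (Fin 3) ℝ) j 2 := by rw [hS.1]
  have hS₀₂ : S 0 2 = 0 := by simpa [mul_apply, Fin.sum_univ_three, hS₀₀, hS₁₀, hS₂₀] using orth 0
  have hS₁₂ : S 1 2 = 0 := by simpa [mul_apply, Fin.sum_univ_three, hS₀₁, hS₁₁, hS₂₁] using orth 1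
  have hS₂₂ : S 2 2 = 1 := by
    simpa [det_fin_three, hS₀₀, hS₁₀, hS₂₀, hS₀₁, hS₁₁, hS₂₁, hS₀₂, hS₁₂] using hS.2
  ext i j
  fin_cases i <;> fin_cases j <;> simp [hS₀₀, hS₁₀, hS₂₀, hS₀₁, hS₁₁, hS₂₁, hS₀₂, hS₁₂, hS₂₂]

lemma eq_of_mem_SO3_of_mulVec_e₁_of_mulVec_e₂ {R R' : Matrix (Fin 3) (Fin 3) ℝ}
    (hR : R ∈ SO3) (hR' : R' ∈ SO3) (h₁ : R' *ᵥ e₁ = R *ᵥ e₁) (h₂ : R' *ᵥ e₂ = R *ᵥ e₂) :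
    R' = R := by
  have fixes {v : Fin 3 → ℝ} (h : R' *ᵥ v = R *ᵥ v) : (Rᵀ * R') *ᵥ v = v := by
    rw [← mulVec_mulVec, h, mulVec_mulVec, hR.1, one_mulVec]
  have hS := eq_one_of_mem_SO3_of_mulVec_e₁_of_mulVec_e₂ (mul_mem_SO3 (transpose_mem_SO3 hR) hR')
    (fixes h₁) (fixes h₂)
  rw [← Matrix.one_mul R', ← mul_transpose_eq_one_of_mem_SO3 hR, Matrix.mul_assoc, hS,
    Matrix.mul_one]

lemma mul_Dmat_ne_self {R : Matrix (Fin 3) (Fin 3) ℝ} (hR : R ∈ SO3) : R * Dmat ≠ R :=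
  fun h => Dmat_ne_one <| by rw [← Matrix.one_mul Dmat, ← hR.1, Matrix.mul_assoc, h]

lemma mul_Dmat_mulVec_e₁ (R : Matrix (Fin 3) (Fin 3) ℝ) : (R * Dmat) *ᵥ e₁ = R *ᵥ e₁ := by
  rw [← mulVec_mulVec, Dmat_mulVec_e₁]

lemma mul_Dmat_mulVec_e₂ (R : Matrix (Fin 3) (Fin 3) ℝ) : (R * Dmat) *ᵥ e₂ = -(R *ᵥ e₂) := by
  rw [← mulVec_mulVec, Dmat_mulVec_e₂, mulVec_neg]

lemma mulVec_e₁_eq_and_mulVec_e₂_eq_or_eq_neg_iff {R R' : Matrix (Fin 3) (Fin 3) ℝ}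
    (hR : R ∈ SO3) (hR' : R' ∈ SO3) :
    (R' *ᵥ e₁ = R *ᵥ e₁ ∧ (R' *ᵥ e₂ = R *ᵥ e₂ ∨ R' *ᵥ e₂ = -(R *ᵥ e₂))) ↔
      (R' = R ∨ R' = R * Dmat) := by
  constructor
  · rintro ⟨h₁, h₂ | h₂⟩
    · exact .inl (eq_of_mem_SO3_of_mulVec_e₁_of_mulVec_e₂ hR hR' h₁ h₂)
    · refine .inr <| eq_of_mem_SO3_of_mulVec_e₁_of_mulVec_e₂ (mul_mem_SO3 hR Dmat_mem_SO3) hR' ?_ ?_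
      · rw [h₁, mul_Dmat_mulVec_e₁]
      · rw [h₂, mul_Dmat_mulVec_e₂]
  · rintro (rfl | rfl)
    · exact ⟨rfl, .inl rfl⟩
    · exact ⟨mul_Dmat_mulVec_e₁ R, .inr (mul_Dmat_mulVec_e₂ R)⟩

lemma span_mulVec_e₂_eq_iff {R R' : Matrix (Fin 3) (Fin 3) ℝ} (hR : R ∈ SO3) (hR' : R' ∈ SO3) :
    Submodule.span ℝ {R' *ᵥ e₂} = Submodule.span ℝ {R *ᵥ e₂} ↔
      R' *ᵥ e₂ = R *ᵥ e₂ ∨ R' *ᵥ e₂ = -(R *ᵥ e₂) := by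
  have unit_col {A : Matrix (Fin 3) (Fin 3) ℝ} (hA : A ∈ SO3) : (A *ᵥ e₂) ⬝ᵥ (A *ᵥ e₂) = 1 := by
    rw [dotProduct_mulVec_mulVec_of_transpose_mul_self hA.1]; simp [e₂]
  exact span_singleton_eq_span_singleton_iff_eq_or_eq_neg (by rw [unit_col hR]; exact one_ne_zero)
    (by rw [unit_col hR, unit_col hR'])

/-- `D = diag(1, -1, -1)` lies in `SO(3)`; for all `R, R' ∈ SO(3)`
one has `R' e₁ = R e₁` and `R' e₂ = ± R e₂` iff `R' = R` or `R' = R·D`. Consequently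
each fiber of the map `R ↦ (R e₁, span (R e₂))` to pairs (unit vector, tangent line)
has exactly two elements. -/
theorem double_cover_onto_tangent_lines :
    Dmat ∈ SO3 ∧
    (∀ R ∈ SO3, ∀ R' ∈ SO3,
      (R'.mulVec e₁ = R.mulVec e₁ ∧
        (R'.mulVec e₂ = R.mulVec e₂ ∨ R'.mulVec e₂ = -(R.mulVec e₂))) ↔
      (R' = R ∨ R' = R * Dmat)) ∧
    (∀ R : SO3,
      Nat.card {R' : SO3 //
        (R' : Matrix (Fin 3) (Fin 3) ℝ).mulVec e₁ =
          (R : Matrix (Fin 3) (Fin 3) ℝ).mulVec e₁ ∧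
        Submodule.span ℝ {(R' : Matrix (Fin 3) (Fin 3) ℝ).mulVec e₂} =
          Submodule.span ℝ {(R : Matrix (Fin 3) (Fin 3) ℝ).mulVec e₂}} = 2) := by
  refine ⟨Dmat_mem_SO3, fun R hR R' hR' => mulVec_e₁_eq_and_mulVec_e₂_eq_or_eq_neg_iff hR hR',
    fun R => ?_⟩
  let RD : SO3 := ⟨R * Dmat, mul_mem_SO3 R.2 Dmat_mem_SO3⟩
  have fiber (R' : SO3) : (R'.1 *ᵥ e₁ = R.1 *ᵥ e₁ ∧
      Submodule.span ℝ {R'.1 *ᵥ e₂} = Submodule.span ℝ {R.1 *ᵥ e₂}) ↔ R' = R ∨ R' = RD := by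
    rw [span_mulVec_e₂_eq_iff R.2 R'.2, mulVec_e₁_eq_and_mulVec_e₂_eq_or_eq_neg_iff R.2 R'.2,
      Subtype.ext_iff, Subtype.ext_iff]
  have hne : R ≠ RD := fun h => mul_Dmat_ne_self R.2 (congrArg Subtype.val h).symm
  rw [Nat.card_congr (Equiv.subtypeEquivRight fiber)]
  exact (Nat.card_coe_set_eq _).trans (Set.ncard_pair hne)
end
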